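/- Let H := (L²([−1,1];ℂ)) × ℂ^d and fix continuous linear maps A, B : ℂ^n → H. For continuous linear maps Â, B̂ : ℂ^n → H define F(Â, B̂) := Σ_{i=0}^{n−1} (‖(Â − A) e_i‖² + ‖(B̂ − B) e_i‖²), where (e_i) is the standard basis of ℂ^n. Let P₁ be the set of pairs (Â, B̂) for which there exist λ_1, …, λ_n ∈ ℂ and linearly independent v_1, …, v_n ∈ ℂ^n with Â v_k = λ_k B̂ v_k for all k, and let P₂ be the set of pairs (Ã, B̃) with range(Ã) ⊆ range(B̃). Then the infimum of F over P₁ equals the infimum of F over P₂. -/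

import Mathlib

set_option maxHeartbeats 1000000

open MeasureTheory

/-- The Hilbert space `H := L²([-1,1];ℂ) × ℂ^d` with the natural (ℓ²-product)
Hilbert-space structure. -/
noncomputable abbrev Hsp (d : ℕ) : Type :=
  WithLp 2 ((Lp ℂ 2 (volume.restrict (Set.Icc (-1:ℝ) 1))) × EuclideanSpace ℂ (Fin d))

/-- The squared Frobenius norm of the perturbation `[Â - A, B̂ - B]`:
`F(Â,B̂) = Σ_i (‖(Â-A)e_i‖² + ‖(B̂-B)e_i‖²)`. -/
noncomputable def frobPerturb (n d : ℕ) (A B : EuclideanSpace ℂ (Fin n) →L[ℂ] Hsp d)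
    (p : (EuclideanSpace ℂ (Fin n) →L[ℂ] Hsp d) × (EuclideanSpace ℂ (Fin n) →L[ℂ] Hsp d)) :
    ℝ :=
  ∑ i, (‖(p.1 - A) (EuclideanSpace.single i 1)‖ ^ 2
      + ‖(p.2 - B) (EuclideanSpace.single i 1)‖ ^ 2)

open Module Submodule

private lemma exists_tri (n : ℕ) :
    ∀ (V : Type) [AddCommGroup V] [Module ℂ V] [FiniteDimensional ℂ V],
      Module.finrank ℂ V = n → ∀ f : Module.End ℂ V,
      ∃ b : Basis (Fin n) ℂ V,
        ∀ k : Fin n, f (b k) ∈ Submodule.span ℂ (b '' {j | k ≤ j}) := by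
  induction n with
  | zero =>
    intro V _ _ _ hV f
    have : Subsingleton V := (Module.finrank_zero_iff (R := ℂ) (M := V)).1 hV
    exact ⟨Basis.empty V, fun k => k.elim0⟩
  | succ n ih =>
    intro V _ _ _ hV f
    have hnt : Nontrivial V := by
      apply Module.nontrivial_of_finrank_pos (R := ℂ) (M := V)
      omega
    obtain ⟨μ, hμ⟩ := Module.End.exists_eigenvalue
      (f.dualMap : Module.End ℂ (Module.Dual ℂ V))
    obtain ⟨φ, hφ⟩ := hμ.exists_hasEigenvector
    have hφ0 : φ ≠ 0 := hφ.2
    have hφf : ∀ x, φ (f x) = μ * φ x := by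
      intro x
      have h1 : f.dualMap φ = μ • φ := hφ.apply_eq_smul
      calc φ (f x) = (f.dualMap φ) x := rfl
        _ = (μ • φ) x := by rw [h1]
        _ = μ * φ x := rfl
    set W := LinearMap.ker φ with hWdef
    have hWinv : ∀ x ∈ W, f x ∈ W := by
      intro x hx
      rw [LinearMap.mem_ker] at hx ⊢
      rw [hφf, hx, mul_zero]
    have hrange : LinearMap.range φ = ⊤ := by
      obtain ⟨x, hx⟩ : ∃ x, φ x ≠ 0 := by
        by_contra h
        push_neg at h
        exact hφ0 (LinearMap.ext fun x => h x)
      rw [LinearMap.range_eq_top]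
      intro c
      refine ⟨(c / φ x) • x, ?_⟩
      simp [div_mul_cancel₀ _ hx]
    have hW : Module.finrank ℂ W = n := by
      have h1 := LinearMap.finrank_range_add_finrank_ker φ
      rw [hrange, finrank_top, hV] at h1
      simp [Module.finrank_self] at h1
      rw [hWdef]
      omega
    obtain ⟨b', hb'⟩ := ih W hW (f.restrict hWinv)
    have hWne : W ≠ ⊤ := by
      intro h
      rw [h, finrank_top, hV] at hW
      omega
    obtain ⟨v, hv⟩ : ∃ v, v ∉ W := by
      by_contra h
      push_neg at h
      exact hWne (Submodule.eq_top_iff'.2 h)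
    set c : Fin (n + 1) → V := Fin.cons v (fun i => (b' i : V)) with hc
    have hspan' : Submodule.span ℂ (Set.range fun i => (b' i : V)) = W := by
      have : (Set.range fun i => (b' i : V)) = W.subtype '' (Set.range b') := by
        ext y; simp
      rw [this, ← Submodule.map_span, b'.span_eq, Submodule.map_top, Submodule.range_subtype]
    have hli : LinearIndependent ℂ c := by
      apply LinearIndependent.fin_cons
      · exact b'.linearIndependent.map' W.subtype W.ker_subtype
      · rwa [hspan']
    have hcard : Fintype.card (Fin (n + 1)) = Module.finrank ℂ V := by simp [hV]
    refine ⟨basisOfLinearIndependentOfCardEqFinrank hli hcard, ?_⟩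
    have hco : ⇑(basisOfLinearIndependentOfCardEqFinrank hli hcard) = c :=
      coe_basisOfLinearIndependentOfCardEqFinrank hli hcard
    intro k
    rw [hco]
    refine Fin.cases ?_ ?_ k
    · have : Submodule.span ℂ (c '' {j | (0 : Fin (n+1)) ≤ j}) = ⊤ := by
        have h0 : {j : Fin (n+1) | (0:Fin (n+1)) ≤ j} = Set.univ := by
          ext j; simp [Fin.zero_le]
        rw [h0, Set.image_univ, ← hco,
          (basisOfLinearIndependentOfCardEqFinrank hli hcard).span_eq]
      rw [this]
      exact Submodule.mem_top
    · intro i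
      have hfc : f (c i.succ) = ((f.restrict hWinv) (b' i) : V) := by
        simp only [hc, Fin.cons_succ]
        rfl
      rw [hfc]
      have hmem := hb' i
      have : ((f.restrict hWinv) (b' i) : V) ∈
          Submodule.map W.subtype (Submodule.span ℂ (b' '' {j | i ≤ j})) :=
        Submodule.mem_map_of_mem hmem
      rw [Submodule.map_span] at this
      refine Submodule.span_mono ?_ this
      rintro y ⟨z, ⟨j, hj, rfl⟩, rfl⟩
      exact ⟨j.succ, by simpa using hj, by simp [hc]⟩

private lemma repr_criterion {V : Type} [AddCommGroup V] [Module ℂ V] {n : ℕ}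
    (b : Basis (Fin n) ℂ V) (x : V) (s : Set (Fin n)) :
    x ∈ Submodule.span ℂ (b '' s) ↔ ∀ i ∉ s, b.repr x i = 0 := by
  rw [Basis.mem_span_image]
  constructor
  · intro h i his
    by_contra h0
    exact his (h (Finsupp.mem_support_iff.2 h0))
  · intro h i hi
    by_contra his
    exact (Finsupp.mem_support_iff.1 hi) (h i his)

private lemma eig_of_tri {V : Type} [AddCommGroup V] [Module ℂ V] [FiniteDimensional ℂ V]
    {n : ℕ} (b : Basis (Fin n) ℂ V) (f : Module.End ℂ V)
    (htri : ∀ k : Fin n, f (b k) ∈ Submodule.span ℂ (b '' {j | k ≤ j})) (k : Fin n) :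
    ∃ x : V, x ≠ 0 ∧ f x = (b.repr (f (b k)) k) • x := by
  set lam := b.repr (f (b k)) k with hlam
  set g : Module.End ℂ V := f - lam • LinearMap.id with hg
  have hgapp : ∀ y : V, g y = f y - lam • y := fun y => rfl
  set Uk := Submodule.span ℂ (b '' {j | k ≤ j}) with hUk
  set Uk1 := Submodule.span ℂ (b '' {j | k < j}) with hUk1
  have hmapb : ∀ j : Fin n, k ≤ j → g (b j) ∈ Uk1 := by
    intro j hj
    rw [hUk1, repr_criterion]
    intro i hi
    have hik : i ≤ k := not_lt.1 hi
    rw [hgapp, map_sub, _root_.map_smul, Finsupp.sub_apply, Finsupp.smul_apply, Basis.repr_self]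
    by_cases hjk : j = k
    · subst hjk
      by_cases hik' : i = j
      · subst hik'
        simp [← hlam]
      · have hij : i < j := lt_of_le_of_ne hik (by exact hik')
        have h0 : b.repr (f (b j)) i = 0 := by
          have := (repr_criterion b (f (b j)) {m | j ≤ m}).1 (htri j)
          exact this i (by simp [not_le, hij])
        simp [h0, Finsupp.single_apply, Ne.symm hik']
    · have hkj : k < j := lt_of_le_of_ne hj (fun h => hjk h.symm)
      have hij : i < j := lt_of_le_of_lt hik hkj
      have h0 : b.repr (f (b j)) i = 0 := by
        have := (repr_criterion b (f (b j)) {m | j ≤ m}).1 (htri j)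
        exact this i (by simp [not_le, hij])
      have hji : j ≠ i := (ne_of_lt hij).symm
      simp [h0, Finsupp.single_apply, hji]
  have hmap : Submodule.map g Uk ≤ Uk1 := by
    rw [hUk, Submodule.map_span, Submodule.span_le]
    rintro y ⟨z, ⟨j, hj, rfl⟩, rfl⟩
    exact hmapb j hj
  have hlt : Uk1 < Uk := by
    refine lt_of_le_of_ne (Submodule.span_mono (Set.image_mono fun j hj => Set.mem_setOf.2 (le_of_lt (Set.mem_setOf.1 hj)))) ?_
    intro heq
    have h1 : b k ∈ Uk := Submodule.subset_span ⟨k, le_refl k, rfl⟩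
    rw [← heq] at h1
    have h2 := (repr_criterion b (b k) {j | k < j}).1 h1 k (by simp)
    rw [Basis.repr_self, Finsupp.single_eq_same] at h2
    exact one_ne_zero h2
  rcases eq_or_ne (LinearMap.ker g) ⊥ with hker | hker
  · exfalso
    have hinj : Function.Injective g := LinearMap.ker_eq_bot.1 hker
    have e := Submodule.equivMapOfInjective g hinj Uk
    have h3 : Module.finrank ℂ (Submodule.map g Uk) = Module.finrank ℂ Uk :=
      (LinearEquiv.finrank_eq e).symm
    have h4 : Module.finrank ℂ (Submodule.map g Uk) ≤ Module.finrank ℂ Uk1 :=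
      Submodule.finrank_mono hmap
    have h5 : Module.finrank ℂ Uk1 < Module.finrank ℂ Uk :=
      Submodule.finrank_lt_finrank_of_lt hlt
    omega
  · obtain ⟨x, hx, hx0⟩ := (Submodule.ne_bot_iff _).1 hker
    refine ⟨x, hx0, ?_⟩
    rw [LinearMap.mem_ker, hgapp, sub_eq_zero] at hx
    exact hx

/-- The infimum of the squared Frobenius perturbation `F` over the set
`P₁` of pairs admitting `n` eigenpairs with linearly independent eigenvectors equals
its infimum over the set `P₂` of pairs with `range(Ã) ⊆ range(B̃)`. -/
theorem stmt8 (n d : ℕ) (A B : EuclideanSpace ℂ (Fin n) →L[ℂ] Hsp d) :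
    sInf (frobPerturb n d A B ''
      {p | ∃ (lam : Fin n → ℂ) (v : Fin n → EuclideanSpace ℂ (Fin n)),
        LinearIndependent ℂ v ∧ ∀ k, p.1 (v k) = lam k • p.2 (v k)})
    = sInf (frobPerturb n d A B '' {p | Set.range p.1 ⊆ Set.range p.2}) := by
  classical
  have hF0 : ∀ p, 0 ≤ frobPerturb n d A B p := by
    intro p
    unfold frobPerturb
    positivity
  set P1 : Set ((EuclideanSpace ℂ (Fin n) →L[ℂ] Hsp d) × (EuclideanSpace ℂ (Fin n) →L[ℂ] Hsp d)) :=
    {p | ∃ (lam : Fin n → ℂ) (v : Fin n → EuclideanSpace ℂ (Fin n)),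
        LinearIndependent ℂ v ∧ ∀ k, p.1 (v k) = lam k • p.2 (v k)} with hP1def
  set P2 : Set ((EuclideanSpace ℂ (Fin n) →L[ℂ] Hsp d) × (EuclideanSpace ℂ (Fin n) →L[ℂ] Hsp d)) :=
    {p | Set.range p.1 ⊆ Set.range p.2} with hP2def
  have hbdd1 : BddBelow (frobPerturb n d A B '' P1) := by
    refine ⟨0, ?_⟩
    rintro q ⟨p, -, rfl⟩
    exact hF0 p
  have hbdd2 : BddBelow (frobPerturb n d A B '' P2) := by
    refine ⟨0, ?_⟩
    rintro q ⟨p, -, rfl⟩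
    exact hF0 p
  have hsingle_li : LinearIndependent ℂ
      (fun i : Fin n => (EuclideanSpace.single i (1:ℂ) : EuclideanSpace ℂ (Fin n))) := by
    have h1 := (EuclideanSpace.basisFun (Fin n) ℂ).toBasis.linearIndependent
    have h2 : ⇑(EuclideanSpace.basisFun (Fin n) ℂ).toBasis
        = fun i : Fin n => (EuclideanSpace.single i (1:ℂ) : EuclideanSpace ℂ (Fin n)) := by
      funext i
      rw [OrthonormalBasis.coe_toBasis, EuclideanSpace.basisFun_apply]
    rwa [h2] at h1
  have hS1ne : (frobPerturb n d A B '' P1).Nonempty := by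
    refine ⟨frobPerturb n d A B (0, 0), ⟨(0, 0), ?_, rfl⟩⟩
    refine ⟨fun _ => 0, fun i => EuclideanSpace.single i 1, hsingle_li, ?_⟩
    intro k
    simp
  have hS2ne : (frobPerturb n d A B '' P2).Nonempty :=
    ⟨frobPerturb n d A B (0, 0), ⟨(0, 0), by simp only [hP2def, Set.mem_setOf_eq]; exact subset_rfl, rfl⟩⟩
  have hsub : P1 ⊆ P2 := by
    rintro p ⟨lam, v, hv, hev⟩
    rintro y ⟨x, rfl⟩
    have hspan : Submodule.span ℂ (Set.range v) = ⊤ :=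
      hv.span_eq_top_of_card_eq_finrank' (by simp)
    have hx : x ∈ Submodule.span ℂ (Set.range v) := by
      rw [hspan]; exact Submodule.mem_top
    have hmem : p.1 x ∈ LinearMap.range (p.2 : EuclideanSpace ℂ (Fin n) →ₗ[ℂ] Hsp d) := by
      induction hx using Submodule.span_induction with
      | mem z hz =>
        obtain ⟨k, rfl⟩ := hz
        exact ⟨lam k • v k, by rw [_root_.map_smul]; exact (hev k).symm⟩
      | zero => simp
      | add x y _ _ hx' hy' => rw [map_add]; exact add_mem hx' hy'
      | smul a x _ hx' => rw [_root_.map_smul]; exact Submodule.smul_mem _ a hx'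
    obtain ⟨u, hu⟩ := hmem
    exact ⟨u, hu⟩
  refine le_antisymm ?_ (csInf_le_csInf hbdd2 hS1ne (Set.image_mono hsub))
  refine le_csInf hS2ne ?_
  rintro x ⟨⟨At, Bt⟩, hp, rfl⟩
  have hp' : Set.range At ⊆ Set.range Bt := hp
  refine le_of_forall_pos_le_add ?_
  intro ε hε
  -- build `C` with `Bt ∘ C = At`
  have hfr : Module.finrank ℂ (EuclideanSpace ℂ (Fin n)) = n := finrank_euclideanSpace_fin
  set e0 := (EuclideanSpace.basisFun (Fin n) ℂ).toBasis with he0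
  have hchoice : ∀ i, ∃ u, Bt u = At (e0 i) := fun i => hp' ⟨e0 i, rfl⟩
  choose w hw using hchoice
  set C : EuclideanSpace ℂ (Fin n) →ₗ[ℂ] EuclideanSpace ℂ (Fin n) := e0.constr ℂ w with hCdef
  have hC : ∀ x, Bt (C x) = At x := by
    have h1 : ((Bt : EuclideanSpace ℂ (Fin n) →ₗ[ℂ] Hsp d).comp C)
        = (At : EuclideanSpace ℂ (Fin n) →ₗ[ℂ] Hsp d) := by
      apply e0.ext
      intro i
      rw [LinearMap.comp_apply]
      simp only [hCdef, Basis.constr_basis]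
      exact hw i
    intro x
    exact LinearMap.congr_fun h1 x
  obtain ⟨b, hb⟩ := exists_tri n (EuclideanSpace ℂ (Fin n)) hfr C
  set dg : Fin n → ℂ := fun k => b.repr (C (b k)) k with hdg
  set g : EuclideanSpace ℂ (Fin n) →ₗ[ℂ] EuclideanSpace ℂ (Fin n) :=
    b.constr ℂ (fun k => (((k : ℕ) : ℂ) + 1) • b k) with hgdef
  have hgb : ∀ k, g (b k) = (((k : ℕ) : ℂ) + 1) • b k := by
    intro k
    simp only [hgdef, Basis.constr_basis]
  set Cc := LinearMap.toContinuousLinearMap C with hCc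
  set gc := LinearMap.toContinuousLinearMap g with hgc
  set P : ℂ → (EuclideanSpace ℂ (Fin n) →L[ℂ] Hsp d) :=
    fun δ => Bt.comp (Cc + δ • gc) with hPdef
  have hPapp : ∀ δ x, P δ x = Bt (C x + δ • g x) := by
    intro δ x
    simp [hPdef, hCc, hgc]
  have hP0 : P 0 = At := by
    ext x
    rw [hPapp]
    simp [hC x]
  -- key: for injective eigenvalue functions, `(P δ, Bt) ∈ P1`
  have hmem1 : ∀ δ : ℂ,
      Function.Injective (fun k : Fin n => dg k + δ * (((k : ℕ) : ℂ) + 1)) →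
      (P δ, Bt) ∈ P1 := by
    intro δ hinj
    set fδ : Module.End ℂ (EuclideanSpace ℂ (Fin n)) := C + δ • g with hfδ
    have hfδb : ∀ k, fδ (b k) = C (b k) + (δ * (((k : ℕ) : ℂ) + 1)) • b k := by
      intro k
      simp [hfδ, hgb k, smul_smul]
    have htri : ∀ k, fδ (b k) ∈ Submodule.span ℂ (b '' {j | k ≤ j}) := by
      intro k
      rw [hfδb]
      refine Submodule.add_mem _ (hb k) (Submodule.smul_mem _ _ ?_)
      exact Submodule.subset_span ⟨k, le_refl k, rfl⟩
    have hdiag : ∀ k, b.repr (fδ (b k)) k = dg k + δ * (((k : ℕ) : ℂ) + 1) := by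
      intro k
      rw [hfδb, map_add, _root_.map_smul, Finsupp.add_apply, Finsupp.smul_apply, Basis.repr_self,
        Finsupp.single_eq_same, smul_eq_mul, mul_one]
    choose xs hxs0 hxse using fun k => eig_of_tri b fδ htri k
    refine ⟨fun k => dg k + δ * (((k : ℕ) : ℂ) + 1), xs, ?_, ?_⟩
    · apply Module.End.eigenvectors_linearIndependent' fδ _ hinj
      intro k
      constructor
      · rw [Module.End.mem_eigenspace_iff, hxse k, hdiag k]
      · exact hxs0 k
    · intro k
      show P δ (xs k) = _ • Bt (xs k)
      rw [hPapp]
      have h1 : C (xs k) + δ • g (xs k) = fδ (xs k) := by simp [hfδ]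
      rw [h1, hxse k, hdiag k, _root_.map_smul]
  -- continuity in `δ`
  have hcont : Continuous fun δ : ℂ => frobPerturb n d A B (P δ, Bt) := by
    have hrw : (fun δ : ℂ => frobPerturb n d A B (P δ, Bt))
        = fun δ : ℂ => ∑ i,
            (‖(Bt (C (EuclideanSpace.single i 1)) - A (EuclideanSpace.single i 1))
              + δ • Bt (g (EuclideanSpace.single i 1))‖ ^ 2
            + ‖(Bt - B) (EuclideanSpace.single i 1)‖ ^ 2) := by
      funext δ
      unfold frobPerturb
      refine Finset.sum_congr rfl fun i _ => ?_
      congr 2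
      rw [ContinuousLinearMap.sub_apply, hPapp, map_add, _root_.map_smul,
        add_sub_right_comm]
    rw [hrw]
    apply continuous_finset_sum
    intro i _
    apply Continuous.add
    · exact ((continuous_const.add (continuous_id.smul continuous_const)).norm).pow 2
    · exact continuous_const
  obtain ⟨r, hr, hball⟩ :=
    Metric.continuousAt_iff.1 (hcont.continuousAt (x := (0 : ℂ))) ε hε
  -- the set of bad real parameters is finite
  set Bad : Set ℝ :=
    {t | ¬ Function.Injective fun k : Fin n => dg k + ((t : ℝ) : ℂ) * (((k : ℕ) : ℂ) + 1)}
    with hBadDef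
  have hBadfin : Bad.Finite := by
    apply Set.Finite.subset (Set.finite_range fun q : Fin n × Fin n =>
      ((dg q.1 - dg q.2) / (((q.2 : ℕ) : ℂ) - ((q.1 : ℕ) : ℂ))).re)
    intro t ht
    simp only [hBadDef, Set.mem_setOf_eq] at ht
    rw [Function.not_injective_iff] at ht
    obtain ⟨j, k, heq, hne⟩ := ht
    refine ⟨(j, k), ?_⟩
    have hjk : (((k : ℕ) : ℂ) - ((j : ℕ) : ℂ)) ≠ 0 := by
      intro h
      apply hne
      have h2 : ((k : ℕ) : ℂ) = ((j : ℕ) : ℂ) := sub_eq_zero.1 h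
      have h3 : (k : ℕ) = (j : ℕ) := Nat.cast_injective h2
      exact (Fin.ext h3).symm
    have ht' : ((t : ℝ) : ℂ) = (dg j - dg k) / (((k : ℕ) : ℂ) - ((j : ℕ) : ℂ)) := by
      rw [eq_div_iff hjk]
      linear_combination -heq
    show ((dg j - dg k) / (((k : ℕ) : ℂ) - ((j : ℕ) : ℂ))).re = t
    rw [← ht', Complex.ofReal_re]
  obtain ⟨t, ht⟩ : ((Set.Ioo (0 : ℝ) r) \ Bad).Nonempty :=
    ((Set.Ioo_infinite hr).diff hBadfin).nonempty
  have htr : dist ((t : ℝ) : ℂ) (0 : ℂ) < r := by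
    rw [dist_zero_right, Complex.norm_real, Real.norm_eq_abs, abs_of_pos ht.1.1]
    exact ht.1.2
  have hinj : Function.Injective fun k : Fin n => dg k + ((t : ℝ) : ℂ) * (((k : ℕ) : ℂ) + 1) :=
    not_not.1 ht.2
  have hq := hball htr
  rw [hP0] at hq
  have hFle : frobPerturb n d A B (P ((t : ℝ) : ℂ), Bt)
      ≤ frobPerturb n d A B (At, Bt) + ε := by
    rw [Real.dist_eq] at hq
    have := abs_lt.1 hq
    linarith [this.2]
  exact (csInf_le hbdd1 ⟨(P ((t : ℝ) : ℂ), Bt), hmem1 _ hinj, rfl⟩).trans hFle
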